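/- Let A be the p×p companion matrix with last row (a_p,...,a_1) and spectral radius < 1. If e_p^T (I - A)^{-1} e_p = 0, then there exist c_1,...,c_{p-1} ∈ ℝ with e_p = (I - A) (c_1,...,c_{p-1},0)^T; examining the entries successively forces c_{p-1} = ... = c_1 = 0, a contradiction. Hence e_p^T (I - A)^{-1} e_p ≠ 0. -/

import Mathlib

/-!
The first `p - 1` rows of `(I - A) v = x e_p` say `v i = v (i + 1)`, so `v` is constant, and
`I - A` maps the constant vector `c` to `c (1 - Σ a_k) e_p`. Hence `x = v_p (1 - Σ a_k)`.
As `1` is not a root, `Σ a_k ≠ 1`: taking `x = 0` shows that `I - A` is invertible, and taking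
for `v` the last column of `(I - A)⁻¹` (so `x = 1`) shows that its last entry is nonzero.
-/

/-- Companion matrix with ones on the superdiagonal and last row
`(a_p, a_{p-1}, ..., a_1)`, where `a k` stands for `a_{k+1}`. -/
def companion (p : ℕ) (a : ℕ → ℝ) : Matrix (Fin p) (Fin p) ℝ :=
  fun i j => if i.val = p - 1 then a (p - 1 - j.val) else if j.val = i.val + 1 then 1 else 0

open Finset Matrix

namespace companion

variable {n : ℕ} {a : ℕ → ℝ}

theorem one_sub_mulVec_castSucc (v : Fin (n + 1) → ℝ) (i : Fin n) :
    ((1 - companion (n + 1) a) *ᵥ v) i.castSucc = v i.castSucc - v i.succ := by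
  rw [sub_mulVec, Pi.sub_apply, one_mulVec]
  congr 1
  rw [mulVec, dotProduct, sum_eq_single i.succ]
  · simp [companion, i.is_lt.ne]
  · intro j _ hj
    have hj' : (j : ℕ) ≠ i + 1 := fun h => hj (Fin.ext h)
    simp [companion, i.is_lt.ne, hj']
  · simp

theorem one_sub_mulVec_const (c : ℝ) :
    (1 - companion (n + 1) a) *ᵥ Function.const _ c =
      Pi.single (Fin.last n) (c * (1 - ∑ k ∈ range (n + 1), a k)) := by
  ext i
  induction i using Fin.lastCases with
  | last =>
    rw [sub_mulVec, Pi.sub_apply, one_mulVec, Pi.single_eq_same, mulVec, dotProduct]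
    have hsum : ∑ j : Fin (n + 1), a (n - j) = ∑ k ∈ range (n + 1), a k := by
      rw [Fin.sum_univ_eq_sum_range (fun j => a (n - j))]
      exact sum_range_reflect a (n + 1)
    simp only [companion, Fin.val_last, Nat.add_sub_cancel, ↓reduceIte, Function.const_apply]
    rw [← sum_mul, hsum]
    ring
  | cast i =>
    rw [one_sub_mulVec_castSucc, Pi.single_eq_of_ne (Fin.castSucc_ne_last i)]
    simp

theorem eq_const_of_one_sub_mulVec_eq_single {v : Fin (n + 1) → ℝ} {x : ℝ}
    (h : (1 - companion (n + 1) a) *ᵥ v = Pi.single (Fin.last n) x) :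
    v = Function.const _ (v (Fin.last n)) := by
  funext i
  induction i using Fin.reverseInduction with
  | last => rfl
  | cast i ih =>
    have hrow := congrFun h i.castSucc
    rw [one_sub_mulVec_castSucc, Pi.single_eq_of_ne (Fin.castSucc_ne_last i), sub_eq_zero] at hrow
    exact hrow.trans ih

theorem eq_mul_of_one_sub_mulVec_eq_single {v : Fin (n + 1) → ℝ} {x : ℝ}
    (h : (1 - companion (n + 1) a) *ᵥ v = Pi.single (Fin.last n) x) :
    x = v (Fin.last n) * (1 - ∑ k ∈ range (n + 1), a k) := by
  rw [eq_const_of_one_sub_mulVec_eq_single h, one_sub_mulVec_const] at h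
  simpa using (congrFun h (Fin.last n)).symm

theorem det_one_sub_ne_zero (ha : ∑ k ∈ range (n + 1), a k ≠ 1) :
    (1 - companion (n + 1) a).det ≠ 0 := by
  rw [Ne, ← exists_mulVec_eq_zero_iff]
  rintro ⟨v, hv, hker⟩
  rw [← Pi.single_zero (Fin.last n)] at hker
  have hlast : v (Fin.last n) = 0 := by
    simpa [sub_eq_zero, Ne.symm ha] using eq_mul_of_one_sub_mulVec_eq_single hker
  exact hv (by rw [eq_const_of_one_sub_mulVec_eq_single hker, hlast]; rfl)

end companion

theorem sum_ne_one_of_forall_root_norm_lt_one {p : ℕ} {a : ℕ → ℝ}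
    (hroot : ∀ z : ℂ, z ^ p - ∑ k ∈ range p, (a k : ℂ) * z ^ (p - 1 - k) = 0 → ‖z‖ < 1) :
    ∑ k ∈ range p, a k ≠ 1 := by
  intro h
  have := hroot 1 (by simp [← Complex.ofReal_sum, h])
  simp at this

/-- If all roots of `z^p - Σ_{k=1}^p a_k z^{p-k}` lie strictly inside the unit
circle (so that `I - A` is invertible), then `e_p^T (I - A)⁻¹ e_p ≠ 0`. -/
theorem stmt1 (p : ℕ) (hp : 0 < p) (a : ℕ → ℝ)
    (hroot : ∀ z : ℂ,
      z ^ p - ∑ k ∈ Finset.range p, (a k : ℂ) * z ^ (p - 1 - k) = 0 → ‖z‖ < 1) :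
    ((1 - companion p a)⁻¹) ⟨p - 1, by omega⟩ ⟨p - 1, by omega⟩ ≠ 0 := by
  obtain ⟨n, rfl⟩ := Nat.exists_eq_add_one_of_ne_zero hp.ne'
  set M := 1 - companion (n + 1) a
  have hM : IsUnit M.det := (companion.det_one_sub_ne_zero
    (sum_ne_one_of_forall_root_norm_lt_one hroot)).isUnit
  have hcol : M *ᵥ M⁻¹.col (Fin.last n) = Pi.single (Fin.last n) 1 := by
    rw [← mulVec_single_one, mulVec_mulVec, mul_nonsing_inv M hM, one_mulVec]
  show M⁻¹ (Fin.last n) (Fin.last n) ≠ 0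
  intro hzero
  simpa [hzero] using companion.eq_mul_of_one_sub_mulVec_eq_single hcol
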